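/- Let G = D₈ with cocycle α as above and let A = Z(D₈) = ⟨a²⟩ ≅ ℤ/2, with σ: A → ℂ* the nontrivial character σ(a²) = −1. Then b·σ = 1 for the twisted action (b·σ)(x) = α(b⁻¹x,b)α(b,b⁻¹x)⁻¹σ(b⁻¹xb); hence D₈ acts transitively on the two characters {1, σ} of its center, and the stabilizer of the trivial character [1] under this action is G_{[1]} = ⟨a⟩ ≅ ℤ/4. -/
import Mathlib

/-- The 2-cocycle on `D_{2n}`: `α(aʲ, aᵏbˡ) = 1`, `α(aʲb, aᵏbˡ) = εᵏ`
(`a = r 1`, `b = sr 0`, `aᵏ = r k`, `aᵏb = sr (-k)`). -/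
def dihedralCocycle (n : ℕ) [NeZero n] (ε : ℂ) :
    DihedralGroup n → DihedralGroup n → ℂ
  | DihedralGroup.r _, _ => 1
  | DihedralGroup.sr _, DihedralGroup.r k => ε ^ k.val
  | DihedralGroup.sr _, DihedralGroup.sr m => ε ^ (-m : ZMod n).val

/-- The twisted action of `g ∈ G` on a character `χ` of a normal subgroup `A`:
`(g·χ)(x) = α(g⁻¹x, g)·α(g, g⁻¹x)⁻¹·χ(g⁻¹xg)`. -/
noncomputable def charAct {G : Type*} [Group G] (A : Subgroup G) (hA : A.Normal)
    (α : G → G → ℂ) (g : G) (χ : A → ℂ) : A → ℂ :=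
  fun a => α (g⁻¹ * a) g * (α g (g⁻¹ * a))⁻¹ *
    χ ⟨g⁻¹ * a * g, by simpa using hA.conj_mem (a : G) a.2 g⁻¹⟩

open DihedralGroup

lemma inv_r' (i : ZMod 4) : (r i : DihedralGroup 4)⁻¹ = r (-i) :=
  inv_eq_of_mul_eq_one_right (by rw [r_mul_r, add_neg_cancel]; rfl)

lemma inv_sr' (i : ZMod 4) : (sr i : DihedralGroup 4)⁻¹ = sr i :=
  inv_eq_of_mul_eq_one_right (sr_mul_self i)

lemma mem_zpowers_r2 (x : DihedralGroup 4) :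
    x ∈ Subgroup.zpowers (r 2 : DihedralGroup 4) ↔ x = r 0 ∨ x = r 2 := by
  constructor
  · rintro ⟨k, rfl⟩
    have h2 : (r 2 : DihedralGroup 4) ^ (2 : ℤ) = 1 := by
      rw [zpow_two, r_mul_r]; rfl
    have hmod : (r 2 : DihedralGroup 4) ^ k = (r 2) ^ (k % 2) := by
      conv_lhs => rw [← Int.mul_ediv_add_emod k 2]
      rw [zpow_add, zpow_mul, h2, one_zpow, one_mul]
    show r 2 ^ k = _ ∨ r 2 ^ k = _
    rw [hmod]
    rcases Int.emod_two_eq k with h | h <;> rw [h]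
    · left; rfl
    · right; rw [zpow_one]
  · rintro (rfl | rfl)
    · exact ⟨0, rfl⟩
    · exact ⟨1, zpow_one _⟩

lemma key_factor (j : ZMod 4) :
    Complex.I ^ ((-j).val) * (Complex.I ^ ((-(j + 2)).val))⁻¹ = -1 := by
  fin_cases j
  · show Complex.I ^ 0 * (Complex.I ^ 2)⁻¹ = -1
    norm_num [Complex.I_sq]
  · show Complex.I ^ 3 * (Complex.I ^ 1)⁻¹ = -1
    rw [pow_succ, pow_succ, pow_one, Complex.I_mul_I]
    field_simp
  · show Complex.I ^ 2 * (Complex.I ^ 0)⁻¹ = -1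
    simp [Complex.I_sq]
  · show Complex.I ^ 1 * (Complex.I ^ 3)⁻¹ = -1
    rw [pow_one, pow_succ, Complex.I_sq]
    rw [mul_inv]
    norm_num [Complex.inv_I, Complex.I_mul_I]

lemma I_pow_cancel (m : ℕ) : Complex.I ^ m * (Complex.I ^ m)⁻¹ = 1 :=
  mul_inv_cancel₀ (pow_ne_zero _ Complex.I_ne_zero)

/-- For `G = D₈`, `A = Z(D₈) = ⟨a²⟩ ≅ ℤ/2` with nontrivial character `σ`,
one has `b·σ = 1` (and `b·1 = σ`), so `D₈` acts transitively on `{1, σ}`, and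
the stabilizer of the trivial character is `⟨a⟩ ≅ ℤ/4`. -/
theorem stmt18 (A : Subgroup (DihedralGroup 4)) (hA : A.Normal)
    (hAeq : A = Subgroup.zpowers (DihedralGroup.r 2))
    (σ : A → ℂ)
    (hσ : ∀ (k : ZMod 4) (h : DihedralGroup.r k ∈ A),
      σ ⟨DihedralGroup.r k, h⟩ = (-1 : ℂ) ^ (k.val / 2)) :
    charAct A hA (dihedralCocycle 4 Complex.I) (DihedralGroup.sr 0)
      (fun x => σ x) = (fun _ => (1 : ℂ)) ∧
    charAct A hA (dihedralCocycle 4 Complex.I) (DihedralGroup.sr 0)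
      (fun _ => (1 : ℂ)) = (fun x => σ x) ∧
    (∀ g : DihedralGroup 4,
      charAct A hA (dihedralCocycle 4 Complex.I) g (fun _ => (1 : ℂ))
        = (fun _ => (1 : ℂ)) ↔
      g ∈ Subgroup.zpowers (DihedralGroup.r 1)) := by
  have hmem : ∀ x : DihedralGroup 4, x ∈ A ↔ x = r 0 ∨ x = r 2 := by
    intro x; rw [hAeq]; exact mem_zpowers_r2 x
  have hsr0 : ∀ (j : ZMod 4) (χ : A → ℂ) (h : r 0 ∈ A),
      charAct A hA (dihedralCocycle 4 Complex.I) (sr j) χ ⟨r 0, h⟩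
        = χ ⟨r 0, h⟩ := by
    intro j χ h
    show dihedralCocycle 4 Complex.I (((sr j)⁻¹) * r 0) (sr j) *
        (dihedralCocycle 4 Complex.I (sr j) ((sr j)⁻¹ * r 0))⁻¹ * χ _ = _
    have e1 : ((sr j : DihedralGroup 4)⁻¹) * r 0 = sr j := by
      rw [inv_sr', sr_mul_r, add_zero]
    have e2 : dihedralCocycle 4 Complex.I ((sr j)⁻¹ * r 0) (sr j)
        = Complex.I ^ ((-j).val) := by rw [e1]; rfl
    have e3 : dihedralCocycle 4 Complex.I (sr j) ((sr j)⁻¹ * r 0)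
        = Complex.I ^ ((-j).val) := by rw [e1]; rfl
    rw [e2, e3, I_pow_cancel, one_mul]
    congr 1
    ext
    show (sr j : DihedralGroup 4)⁻¹ * r 0 * sr j = r 0
    rw [e1, sr_mul_sr, sub_self]
  have hsr2 : ∀ (j : ZMod 4) (χ : A → ℂ) (h : r 2 ∈ A),
      charAct A hA (dihedralCocycle 4 Complex.I) (sr j) χ ⟨r 2, h⟩
        = -χ ⟨r 2, h⟩ := by
    intro j χ h
    show dihedralCocycle 4 Complex.I (((sr j)⁻¹) * r 2) (sr j) *
        (dihedralCocycle 4 Complex.I (sr j) ((sr j)⁻¹ * r 2))⁻¹ * χ _ = _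
    have e1 : ((sr j : DihedralGroup 4)⁻¹) * r 2 = sr (j + 2) := by
      rw [inv_sr', sr_mul_r]
    have e2 : dihedralCocycle 4 Complex.I ((sr j)⁻¹ * r 2) (sr j)
        = Complex.I ^ ((-j).val) := by rw [e1]; rfl
    have e3 : dihedralCocycle 4 Complex.I (sr j) ((sr j)⁻¹ * r 2)
        = Complex.I ^ ((-(j + 2)).val) := by rw [e1]; rfl
    rw [e2, e3, key_factor, neg_one_mul]
    congr 2
    ext
    show (sr j : DihedralGroup 4)⁻¹ * r 2 * sr j = r 2
    rw [e1, sr_mul_sr]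
    congr 1
    have : j - (j + 2) = (-2 : ZMod 4) := by ring
    rw [this]; decide
  have hr : ∀ (j k : ZMod 4) (χ : A → ℂ) (h : r k ∈ A),
      charAct A hA (dihedralCocycle 4 Complex.I) (r j) χ ⟨r k, h⟩
        = χ ⟨r k, h⟩ := by
    intro j k χ h
    show dihedralCocycle 4 Complex.I (((r j)⁻¹) * r k) (r j) *
        (dihedralCocycle 4 Complex.I (r j) ((r j)⁻¹ * r k))⁻¹ * χ _ = _
    have e1 : ((r j : DihedralGroup 4)⁻¹) * r k = r (-j + k) := by
      rw [inv_r', r_mul_r]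
    have e2 : dihedralCocycle 4 Complex.I ((r j)⁻¹ * r k) (r j) = 1 := by rw [e1]; rfl
    have e3 : dihedralCocycle 4 Complex.I (r j) ((r j)⁻¹ * r k) = 1 := by rw [e1]; rfl
    rw [e2, e3, inv_one, one_mul, one_mul]
    congr 1
    ext
    show (r j : DihedralGroup 4)⁻¹ * r k * r j = r k
    rw [e1, r_mul_r]
    congr 1
    ring
  have hσ0 : ∀ h, σ ⟨r 0, h⟩ = 1 := fun h => by
    rw [hσ 0 h, show ((0 : ZMod 4)).val = 0 from rfl]; norm_num
  have hσ2 : ∀ h, σ ⟨r 2, h⟩ = -1 := fun h => by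
    rw [hσ 2 h, show ((2 : ZMod 4)).val = 2 from rfl]; norm_num
  refine ⟨?_, ?_, ?_⟩
  · funext a
    obtain ⟨x, hx⟩ := a
    rcases (hmem x).1 hx with rfl | rfl
    · rw [hsr0 0 _ hx]; exact hσ0 hx
    · rw [hsr2 0 _ hx, hσ2 hx]; norm_num
  · funext a
    obtain ⟨x, hx⟩ := a
    rcases (hmem x).1 hx with rfl | rfl
    · rw [hsr0 0 _ hx]; exact (hσ0 hx).symm
    · rw [hsr2 0 _ hx]; exact (hσ2 hx).symm
  · intro g
    constructor
    · intro hfun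
      rcases g with j | j
      · exact ⟨(j.val : ℤ), by
          show (r 1 : DihedralGroup 4) ^ ((j.val : ℕ) : ℤ) = r j
          rw [zpow_natCast, r_one_pow, ZMod.natCast_val, ZMod.cast_id]⟩
      · exfalso
        have h2 : r (2 : ZMod 4) ∈ A := (hmem _).2 (Or.inr rfl)
        have := congrFun hfun ⟨r 2, h2⟩
        rw [hsr2 j _ h2] at this
        norm_num at this
    · rintro ⟨k, rfl⟩
      have hform : ∃ m : ZMod 4, (r 1 : DihedralGroup 4) ^ k = r m := by
        rcases k with n | n
        · refine ⟨n, ?_⟩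
          show (r 1 : DihedralGroup 4) ^ ((n : ℕ) : ℤ) = r n
          rw [zpow_natCast, r_one_pow]
        · refine ⟨-(n + 1 : ℕ), ?_⟩
          rw [zpow_negSucc, r_one_pow, inv_r']
      obtain ⟨m, hm⟩ := hform
      show (charAct A hA (dihedralCocycle 4 Complex.I) ((r 1 : DihedralGroup 4) ^ k)
        fun _ => (1 : ℂ)) = fun _ => (1 : ℂ)
      rw [hm]
      funext a
      obtain ⟨x, hx⟩ := a
      rcases (hmem x).1 hx with rfl | rfl <;> rw [hr m _ _ hx]
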